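/- arXiv:1206.5221 — 2 statements merged into one kernel-verified Lean document; each statement's English description precedes it below -/
import Mathlib

section
/- Let Q be a digraph and a a sink vertex of Q (every connection touching a is an incoming arrow). Then in the Hecke–Kiselman monoid H_Q, for every element x one has a·x·a = x·a. -/
/-!
For an idempotent `e`, the elements `x` with `e * x * e = x * e` form a submonoid, so it is
enough to check the generators `j`. For `j = a` this is idempotency; if `j → a` it is the
defining relation `j a = a j a`; otherwise `a` and `j` are not connected at all (`a` is a sink),
so they commute and `a j a = j a a = j a`.
-/

open FreeMonoid

structure HKGraph (V : Type) where
  edge : V → V → Prop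
  arrow : V → V → Prop
  edge_symm : ∀ i j, edge i j → edge j i
  edge_irrefl : ∀ i, ¬ edge i i
  arrow_irrefl : ∀ i, ¬ arrow i i
  edge_not_arrow : ∀ i j, edge i j → ¬ arrow i j
  arrow_asymm : ∀ i j, arrow i j → ¬ arrow j i

namespace HKGraph
variable {V : Type}

/-- The defining relations of the Hecke–Kiselman monoid of a digraph. -/
inductive Rel (Q : HKGraph V) : FreeMonoid V → FreeMonoid V → Prop
  | idem (i : V) : Rel Q (of i * of i) (of i)
  | comm (i j : V) : i ≠ j → ¬ Q.edge i j → ¬ Q.arrow i j → ¬ Q.arrow j i →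
      Rel Q (of i * of j) (of j * of i)
  | braid (i j : V) : Q.edge i j → Rel Q (of i * of j * of i) (of j * of i * of j)
  | arrow_left (i j : V) : Q.arrow i j → Rel Q (of i * of j) (of i * of j * of i)
  | arrow_right (i j : V) : Q.arrow i j → Rel Q (of i * of j) (of j * of i * of j)

/-- The Hecke–Kiselman monoid of a digraph. -/
abbrev HK (Q : HKGraph V) : Type := (conGen Q.Rel).Quotient

/-- The idempotent generator of `HK Q` attached to a vertex. -/
def gen (Q : HKGraph V) (i : V) : HK Q := Con.mk' _ (of i)

end HKGraph

theorem IsIdempotentElem.mul_mul_eq_mul_of_mem_closure {M : Type*} [Monoid M] {e : M}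
    (he : IsIdempotentElem e) {s : Set M} (hs : ∀ g ∈ s, e * g * e = g * e) {x : M}
    (hx : x ∈ Submonoid.closure s) : e * x * e = x * e := by
  induction hx using Submonoid.closure_induction with
  | mem g hg => exact hs g hg
  | one => simpa using he.eq
  | mul x y _ _ hx hy =>
    calc e * (x * y) * e = e * x * (y * e) := by simp only [mul_assoc]
      _ = e * x * e * (y * e) := by rw [mul_assoc (e * x) e, ← mul_assoc e y e, hy]
      _ = x * y * e := by rw [hx, mul_assoc x e, ← mul_assoc e y e, hy, ← mul_assoc]

namespace HKGraph

variable {V : Type} (Q : HKGraph V)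

def IsSink (a : V) : Prop := (∀ j, ¬ Q.edge a j) ∧ (∀ j, ¬ Q.arrow a j)

theorem mk_eq_mk_of_rel {x y : FreeMonoid V} (h : Q.Rel x y) :
    Con.mk' (conGen Q.Rel) x = Con.mk' (conGen Q.Rel) y :=
  (Con.eq _).mpr (ConGen.Rel.of _ _ h)

theorem isIdempotentElem_gen (i : V) : IsIdempotentElem (Q.gen i) :=
  Q.mk_eq_mk_of_rel (Rel.idem i)

theorem gen_mul_gen_comm {i j : V} (hne : i ≠ j) (hedge : ¬ Q.edge i j) (hij : ¬ Q.arrow i j)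
    (hji : ¬ Q.arrow j i) : Q.gen i * Q.gen j = Q.gen j * Q.gen i :=
  Q.mk_eq_mk_of_rel (Rel.comm i j hne hedge hij hji)

theorem gen_mul_gen_of_arrow {i j : V} (h : Q.arrow i j) :
    Q.gen i * Q.gen j = Q.gen j * Q.gen i * Q.gen j :=
  Q.mk_eq_mk_of_rel (Rel.arrow_right i j h)

theorem closure_range_gen : Submonoid.closure (Set.range Q.gen) = ⊤ := by
  have hrange : Set.range Q.gen = Con.mk' (conGen Q.Rel) '' Set.range of := by
    rw [← Set.range_comp]; rfl
  rw [hrange, ← MonoidHom.map_mclosure, FreeMonoid.closure_range_of, ← MonoidHom.mrange_eq_map,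
    MonoidHom.mrange_eq_top_of_surjective _ Con.mk'_surjective]

theorem gen_mul_gen_mul_gen_of_isSink {a : V} (ha : Q.IsSink a) (j : V) :
    Q.gen a * Q.gen j * Q.gen a = Q.gen j * Q.gen a := by
  by_cases hja : j = a
  · subst hja
    rw [(Q.isIdempotentElem_gen j).eq, (Q.isIdempotentElem_gen j).eq]
  by_cases harr : Q.arrow j a
  · exact (Q.gen_mul_gen_of_arrow harr).symm
  · rw [Q.gen_mul_gen_comm (Ne.symm hja) (ha.1 j) (ha.2 j) harr, mul_assoc,
      (Q.isIdempotentElem_gen a).eq]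

end HKGraph

/-- If `a` is a sink vertex (every connection touching `a` is an incoming arrow),
then `a·x·a = x·a` for every `x` in the Hecke–Kiselman monoid. -/
theorem sink_absorb {V : Type} (Q : HKGraph V) (a : V)
    (hsink : (∀ j, ¬ Q.edge a j) ∧ (∀ j, ¬ Q.arrow a j)) :
    ∀ x : Q.HK, Q.gen a * x * Q.gen a = x * Q.gen a := by
  intro x
  refine (Q.isIdempotentElem_gen a).mul_mul_eq_mul_of_mem_closure ?_
    (Q.closure_range_gen ▸ Submonoid.mem_top x)
  rintro _ ⟨j, rfl⟩
  exact Q.gen_mul_gen_mul_gen_of_isSink hsink j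
end

section
/- In the Hecke–Kiselman monoid H_K of K (vertices a,b,c,d; edges a—b, c—d; arrows a→c, a→d, b→c, b→d), for every element z of the submonoid generated by a and b, one has c·z·c = z·c and d·z·d = z·d. -/
open FreeMonoid

/-- The four vertices `a, b, c, d` of the digraph `K`. -/
inductive V4 : Type | a | b | c | d

open V4

/-- Defining relations of the Hecke–Kiselman monoid of `K`: edges `a—b`, `c—d`,
arrows `a→c`, `a→d`, `b→c`, `b→d`. -/
inductive KRel : FreeMonoid V4 → FreeMonoid V4 → Prop
  | idem (x : V4) : KRel (of x * of x) (of x)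
  | braid_ab : KRel (of a * of b * of a) (of b * of a * of b)
  | braid_cd : KRel (of c * of d * of c) (of d * of c * of d)
  | ac₁ : KRel (of a * of c) (of a * of c * of a)
  | ac₂ : KRel (of a * of c) (of c * of a * of c)
  | ad₁ : KRel (of a * of d) (of a * of d * of a)
  | ad₂ : KRel (of a * of d) (of d * of a * of d)
  | bc₁ : KRel (of b * of c) (of b * of c * of b)
  | bc₂ : KRel (of b * of c) (of c * of b * of c)
  | bd₁ : KRel (of b * of d) (of b * of d * of b)
  | bd₂ : KRel (of b * of d) (of d * of b * of d)

/-- The Hecke–Kiselman monoid `H_K`. -/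
abbrev HKK : Type := (conGen KRel).Quotient

/-- Images of the generators in `H_K`. -/
def ga : HKK := Con.mk' _ (of a)
def gb : HKK := Con.mk' _ (of b)
def gc : HKK := Con.mk' _ (of c)
def gd : HKK := Con.mk' _ (of d)

/-! If `e` is idempotent, the elements `x` with `e x e = x e` are closed under products
(`e x y e = e x e y e = x e y e = x y e`) and contain `1`, so they form a submonoid.
The relations `a c = c a c`, `b c = c b c` (and likewise for `d`) put `a` and `b` in it. -/

section RightAbsorbing

variable {M : Type*} [Monoid M]

def rightAbsorbingSubmonoid (e : M) (he : IsIdempotentElem e) : Submonoid M where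
  carrier := {x | e * x * e = x * e}
  one_mem' := show e * 1 * e = 1 * e by rw [mul_one, one_mul, he.eq]
  mul_mem' {x y} (hx : e * x * e = x * e) (hy : e * y * e = y * e) :=
    calc e * (x * y) * e = e * x * (e * y * e) := by rw [hy, mul_assoc, mul_assoc, mul_assoc]
      _ = e * x * e * (y * e) := by simp only [mul_assoc]
      _ = x * (e * y * e) := by rw [hx]; simp only [mul_assoc]
      _ = x * y * e := by rw [hy, mul_assoc]

end RightAbsorbing

theorem HKK.mk_eq_of_krel {x y : FreeMonoid V4} (h : KRel x y) :
    (Con.mk' (conGen KRel) x : HKK) = Con.mk' _ y :=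
  (Con.eq _).mpr (ConGen.Rel.of _ _ h)

theorem isIdempotentElem_gc : IsIdempotentElem gc := by
  unfold IsIdempotentElem
  simpa only [gc, map_mul] using HKK.mk_eq_of_krel (KRel.idem c)

theorem isIdempotentElem_gd : IsIdempotentElem gd := by
  unfold IsIdempotentElem
  simpa only [gd, map_mul] using HKK.mk_eq_of_krel (KRel.idem d)

theorem gc_mul_ga_mul_gc : gc * ga * gc = ga * gc := by
  simpa only [ga, gc, map_mul] using (HKK.mk_eq_of_krel KRel.ac₂).symm

theorem gc_mul_gb_mul_gc : gc * gb * gc = gb * gc := by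
  simpa only [gb, gc, map_mul] using (HKK.mk_eq_of_krel KRel.bc₂).symm

theorem gd_mul_ga_mul_gd : gd * ga * gd = ga * gd := by
  simpa only [ga, gd, map_mul] using (HKK.mk_eq_of_krel KRel.ad₂).symm

theorem gd_mul_gb_mul_gd : gd * gb * gd = gb * gd := by
  simpa only [gb, gd, map_mul] using (HKK.mk_eq_of_krel KRel.bd₂).symm

/-- In `H_K`, for every `z` in the submonoid generated by `a` and `b`,
`c·z·c = z·c` and `d·z·d = z·d`. -/
theorem hkK_right_absorb (z : HKK) (hz : z ∈ Submonoid.closure {ga, gb}) :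
    gc * z * gc = z * gc ∧ gd * z * gd = z * gd := by
  have closure_le_c :
      Submonoid.closure {ga, gb} ≤ rightAbsorbingSubmonoid gc isIdempotentElem_gc :=
    Submonoid.closure_le.2 <| Set.pair_subset gc_mul_ga_mul_gc gc_mul_gb_mul_gc
  have closure_le_d :
      Submonoid.closure {ga, gb} ≤ rightAbsorbingSubmonoid gd isIdempotentElem_gd :=
    Submonoid.closure_le.2 <| Set.pair_subset gd_mul_ga_mul_gd gd_mul_gb_mul_gd
  exact ⟨closure_le_c hz, closure_le_d hz⟩
end
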